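/- Let q : ℝ^D × [t0,T] → ℝ be smooth and positive, and suppose q satisfies the (heat-type) Fokker–Planck equation ∂ₜq = (1/2)g²(t)·Δₓq. Then the score s(x,t) := ∇ₓ log q(x,t) satisfies the score Fokker–Planck equation ∂ₜs = (1/2)g²(t)·∇ₓ( divₓ(s) + ‖s‖²₂ ). -/

import Mathlib

open Finset Set

/-- Partial derivative in the `j`-th coordinate. -/
noncomputable def pd {D : ℕ} (j : Fin D) (f : (Fin D → ℝ) → ℝ) (x : Fin D → ℝ) : ℝ :=
  fderiv ℝ f x (Pi.single j 1)

lemma pd_eq_fderiv_prod {D : ℕ} (f : (Fin D → ℝ) × ℝ → ℝ)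
    (x : Fin D → ℝ) (t : ℝ) (hf : DifferentiableAt ℝ f (x, t)) (i : Fin D) :
    pd i (fun y => f (y, t)) x = fderiv ℝ f (x, t) (Pi.single i 1, 0) := by
  have h1 : HasFDerivAt (fun y : Fin D → ℝ => (y, t))
      (ContinuousLinearMap.inl ℝ (Fin D → ℝ) ℝ) x := hasFDerivAt_prodMk_left x t
  have h2 : HasFDerivAt (fun y => f (y, t))
      ((fderiv ℝ f (x, t)).comp (ContinuousLinearMap.inl ℝ (Fin D → ℝ) ℝ)) x :=
    hf.hasFDerivAt.comp x h1
  rw [pd, h2.fderiv]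
  simp

lemma hasDerivAt_comp_snd {D : ℕ} (f : (Fin D → ℝ) × ℝ → ℝ)
    (x : Fin D → ℝ) (t : ℝ) (hf : DifferentiableAt ℝ f (x, t)) :
    HasDerivAt (fun τ => f (x, τ)) (fderiv ℝ f (x, t) (0, 1)) t := by
  have h1 : HasFDerivAt (fun τ : ℝ => (x, τ))
      (ContinuousLinearMap.inr ℝ (Fin D → ℝ) ℝ) t := hasFDerivAt_prodMk_right x t
  have h2 : HasFDerivAt (fun τ => f (x, τ))
      ((fderiv ℝ f (x, t)).comp (ContinuousLinearMap.inr ℝ (Fin D → ℝ) ℝ)) t :=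
    hf.hasFDerivAt.comp t h1
  have h3 := h2.hasDerivAt
  simpa using h3

lemma contDiff_fderiv_apply {E : Type*} [NormedAddCommGroup E] [NormedSpace ℝ E]
    (f : E → ℝ) (hf : ContDiff ℝ (⊤ : ℕ∞) f) (v : E) :
    ContDiff ℝ (⊤ : ℕ∞) (fun y => fderiv ℝ f y v) := by
  exact (ContinuousLinearMap.apply ℝ ℝ v).contDiff.comp (hf.fderiv_right (by simp))

lemma fderiv_swap {E : Type*} [NormedAddCommGroup E] [NormedSpace ℝ E]
    (f : E → ℝ) (hf : ContDiff ℝ (⊤ : ℕ∞) f) (p : E) (u w : E) :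
    fderiv ℝ (fun z => fderiv ℝ f z u) p w = fderiv ℝ (fun z => fderiv ℝ f z w) p u := by
  have hd2 : HasFDerivAt (fderiv ℝ f) (fderiv ℝ (fderiv ℝ f) p) p :=
    (((hf.fderiv_right (m := (⊤ : ℕ∞)) (by simp)).differentiable (by simp)) p).hasFDerivAt
  have key : ∀ v : E, fderiv ℝ (fun z => fderiv ℝ f z v) p
      = (ContinuousLinearMap.apply ℝ ℝ v).comp (fderiv ℝ (fderiv ℝ f) p) := by
    intro v
    exact (((ContinuousLinearMap.apply ℝ ℝ v).hasFDerivAt).comp p hd2).fderiv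
  have hsymm : IsSymmSndFDerivAt ℝ f p :=
    hf.contDiffAt.isSymmSndFDerivAt (by rw [minSmoothness_of_isRCLikeNormedField]; exact WithTop.coe_le_coe.2 le_top)
  rw [key u, key w]
  simpa using hsymm w u

lemma pd_log {D : ℕ} (h : (Fin D → ℝ) → ℝ) (x : Fin D → ℝ)
    (hd : DifferentiableAt ℝ h x) (hne : h x ≠ 0) (j : Fin D) :
    pd j (fun y => Real.log (h y)) x = pd j h x / h x := by
  rw [pd, (hd.hasFDerivAt.log hne).fderiv]
  simp [pd, div_eq_inv_mul]

lemma pd_div {D : ℕ} (f h : (Fin D → ℝ) → ℝ) (x : Fin D → ℝ)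
    (hf : DifferentiableAt ℝ f x) (hh : DifferentiableAt ℝ h x) (hne : h x ≠ 0) (j : Fin D) :
    pd j (fun y => f y / h y) x = (pd j f x * h x - f x * pd j h x) / (h x) ^ 2 := by
  have h1 : HasFDerivAt (fun y => (h y)⁻¹)
      ((ContinuousLinearMap.smulRight (1 : ℝ →L[ℝ] ℝ) (-((h x) ^ 2)⁻¹)).comp (fderiv ℝ h x)) x :=
    (hasFDerivAt_inv hne).comp x hh.hasFDerivAt
  have h2 : HasFDerivAt (fun y => f y * (h y)⁻¹) (f x • ((ContinuousLinearMap.smulRight (1 : ℝ →L[ℝ] ℝ) (-((h x) ^ 2)⁻¹)).comp (fderiv ℝ h x)) + (h x)⁻¹ • fderiv ℝ f x) x := hf.hasFDerivAt.mul h1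
  have h3 : (fun y => f y / h y) = fun y => f y * (h y)⁻¹ := by
    funext y; rw [div_eq_mul_inv]
  rw [pd, h3, h2.fderiv]
  simp only [ContinuousLinearMap.add_apply, ContinuousLinearMap.smul_apply,
    ContinuousLinearMap.comp_apply, ContinuousLinearMap.smulRight_apply,
    ContinuousLinearMap.one_apply, smul_eq_mul, pd]
  field_simp
  ring

lemma pd_const_mul {D : ℕ} (h : (Fin D → ℝ) → ℝ) (x : Fin D → ℝ)
    (hd : DifferentiableAt ℝ h x) (c : ℝ) (j : Fin D) :
    pd j (fun y => c * h y) x = c * pd j h x := by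
  rw [pd, fderiv_const_mul hd c]
  simp [pd]

/-- If a smooth positive density `q` satisfies the heat-type
Fokker–Planck equation `∂ₜ q = ½ g(t)² Δₓ q`, then the score `s = ∇ₓ log q` satisfies
the score Fokker–Planck equation `∂ₜ s = ½ g(t)² ∇ₓ( divₓ s + ‖s‖₂² )`. -/
theorem stmt1 {D : ℕ} (t0 T : ℝ) (g : ℝ → ℝ) (hg : Continuous g)
    (q : (Fin D → ℝ) → ℝ → ℝ)
    (hq : ContDiff ℝ (⊤ : ℕ∞) (fun p : (Fin D → ℝ) × ℝ => q p.1 p.2))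
    (hqpos : ∀ x t, 0 < q x t)
    (hheat : ∀ x : Fin D → ℝ, ∀ t ∈ Set.Icc t0 T,
      deriv (fun τ => q x τ) t
        = (1 / 2) * (g t) ^ 2 * ∑ j, pd j (fun y => pd j (fun z => q z t) y) x)
    (s : (Fin D → ℝ) → ℝ → (Fin D → ℝ))
    (hscore : ∀ x t i, s x t i = pd i (fun y => Real.log (q y t)) x) :
    ∀ x : Fin D → ℝ, ∀ t ∈ Set.Icc t0 T,
      deriv (fun τ => s x τ) t
        = ((1 : ℝ) / 2 * (g t) ^ 2) •
            (fun i => pd i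
              (fun y => (∑ j, pd j (fun z => s z t j) y) + ∑ j, (s y t j) ^ 2) x) := by
  intro x t ht
  have hQd : Differentiable ℝ (fun p : (Fin D → ℝ) × ℝ => q p.1 p.2) := hq.differentiable (by simp)
  have hF : ContDiff ℝ (⊤ : ℕ∞) (fun p : (Fin D → ℝ) × ℝ => Real.log (q p.1 p.2)) :=
    hq.log (fun p => (hqpos p.1 p.2).ne')
  set F : (Fin D → ℝ) × ℝ → ℝ := fun p => Real.log (q p.1 p.2) with hFdef
  have hFd : Differentiable ℝ F := hF.differentiable (by simp)
  have hGsm : ∀ v : (Fin D → ℝ) × ℝ, ContDiff ℝ (⊤ : ℕ∞) (fun p => fderiv ℝ F p v) :=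
    contDiff_fderiv_apply F hF
  -- smoothness of x-sections of q
  have hqt : ContDiff ℝ (⊤ : ℕ∞) (fun z : Fin D → ℝ => q z t) := by
    exact hq.comp (contDiff_id.prodMk contDiff_const)
  have hd1 : ∀ j : Fin D, ContDiff ℝ (⊤ : ℕ∞) (fun z : Fin D → ℝ => pd j (fun z' => q z' t) z) :=
    fun j => contDiff_fderiv_apply _ hqt _
  have hlap : ContDiff ℝ (⊤ : ℕ∞)
      (fun y : Fin D → ℝ => ∑ j, pd j (fun y' => pd j (fun z => q z t) y') y) :=
    ContDiff.sum fun j _ => contDiff_fderiv_apply _ (hd1 j) _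
  have hlapq : ContDiff ℝ (⊤ : ℕ∞)
      (fun y : Fin D → ℝ =>
        (∑ j, pd j (fun y' => pd j (fun z => q z t) y') y) / q y t) :=
    hlap.div hqt (fun y => (hqpos y t).ne')
  -- step 1: componentwise time derivative
  have hsd : ∀ i : Fin D, HasDerivAt (fun τ => s x τ i)
      (fderiv ℝ (fun p => fderiv ℝ F p (Pi.single i 1, 0)) (x, t) (0, 1)) t := by
    intro i
    have heq : (fun τ => s x τ i)
        = fun τ => fderiv ℝ F (x, τ) (Pi.single i 1, 0) := by
      funext τ
      rw [hscore]
      exact pd_eq_fderiv_prod F x τ (hFd _) i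
    rw [heq]
    exact hasDerivAt_comp_snd (fun p => fderiv ℝ F p (Pi.single i 1, 0)) x t
      (((hGsm _).differentiable (by simp)) _)
  have hDeriv : deriv (fun τ => s x τ) t
      = fun i => fderiv ℝ (fun p => fderiv ℝ F p (Pi.single i 1, 0)) (x, t) (0, 1) :=
    (hasDerivAt_pi.2 hsd).deriv
  rw [hDeriv]
  funext i
  -- swap mixed partials
  rw [fderiv_swap F hF (x, t) (Pi.single i 1, 0) (0, 1)]
  rw [← pd_eq_fderiv_prod (fun p => fderiv ℝ F p (0, 1)) x t (((hGsm _).differentiable (by simp)) _) i]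
  -- identify the time derivative of log q
  have hinner : (fun y => fderiv ℝ F (y, t) (0, 1))
      = fun y => (1 / 2) * (g t) ^ 2 *
          ((∑ j, pd j (fun y' => pd j (fun z => q z t) y') y) / q y t) := by
    funext y
    have hdq : HasDerivAt (fun τ => q y τ)
        (fderiv ℝ (fun p : (Fin D → ℝ) × ℝ => q p.1 p.2) (y, t) (0, 1)) t :=
      hasDerivAt_comp_snd (fun p : (Fin D → ℝ) × ℝ => q p.1 p.2) y t (hQd _)
    have hlog := hdq.log (hqpos y t).ne'
    have hF' : HasDerivAt (fun τ => F (y, τ)) (fderiv ℝ F (y, t) (0, 1)) t :=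
      hasDerivAt_comp_snd F y t (hFd _)
    have h1 : fderiv ℝ F (y, t) (0, 1)
        = fderiv ℝ (fun p : (Fin D → ℝ) × ℝ => q p.1 p.2) (y, t) (0, 1) / q y t :=
      hF'.unique hlog
    have h2 : fderiv ℝ (fun p : (Fin D → ℝ) × ℝ => q p.1 p.2) (y, t) (0, 1)
        = (1 / 2) * (g t) ^ 2 * ∑ j, pd j (fun y' => pd j (fun z => q z t) y') y := by
      rw [← hdq.deriv]
      exact hheat y t ht
    rw [h1, h2, mul_div_assoc]
  rw [hinner]
  rw [pd_const_mul _ x (hlapq.differentiable (by simp) x) _ i]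
  rw [Pi.smul_apply, smul_eq_mul]
  congr 1
  -- the pointwise identity: div s + |s|^2 = Δq / q
  congr 1
  funext y
  have hsfun : ∀ j : Fin D, (fun z => s z t j)
      = fun z => pd j (fun z' => q z' t) z / q z t := by
    intro j
    funext z
    rw [hscore z t j, pd_log (fun z' => q z' t) z (hqt.differentiable (by simp) z)
      (hqpos z t).ne' j]
  have hterm : ∀ j : Fin D,
      pd j (fun z => s z t j) y + (s y t j) ^ 2
        = pd j (fun y' => pd j (fun z => q z t) y') y / q y t := by
    intro j
    rw [hsfun j]
    rw [pd_div _ _ y ((hd1 j).differentiable (by simp) y) (hqt.differentiable (by simp) y)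
      (hqpos y t).ne' j]
    have hs' : s y t j = pd j (fun z' => q z' t) y / q y t := by
      rw [hscore y t j, pd_log (fun z' => q z' t) y (hqt.differentiable (by simp) y)
        (hqpos y t).ne' j]
    rw [hs']
    have hc : q y t ≠ 0 := (hqpos y t).ne'
    field_simp
    ring
  symm
  calc (∑ j, pd j (fun z => s z t j) y) + ∑ j, (s y t j) ^ 2
      = ∑ j, (pd j (fun z => s z t j) y + (s y t j) ^ 2) := by
        rw [Finset.sum_add_distrib]
    _ = ∑ j, pd j (fun y' => pd j (fun z => q z t) y') y / q y t := by
        exact Finset.sum_congr rfl fun j _ => hterm j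
    _ = (∑ j, pd j (fun y' => pd j (fun z => q z t) y') y) / q y t := by
        rw [Finset.sum_div]
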